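/- Fix an increasing price function P. All zone tariffs with overlap areas (ZOA) with respect to P satisfy the no-stopover property if and only if P is subadditive, i.e., P(k_1 + k_2) ≤ P(k_1) + P(k_2) for all k_1, k_2 ≥ 1. -/

import Mathlib

open scoped Classical

/-- A path in a graph given by adjacency relation `adj`: a nonempty list of
consecutively adjacent nodes. -/
def IsPath {V : Type*} (adj : V → V → Prop) (W : List V) : Prop :=
  W ≠ [] ∧ W.Chain' adj

/-- An `x`-`y`-path. -/
def IsXYPath {V : Type*} (adj : V → V → Prop) (x y : V) (W : List V) : Prop :=
  IsPath adj W ∧ W.head? = some x ∧ W.getLast? = some y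

/-- `W` decomposes as the concatenation `W₁ + W₂` (the last node of `W₁` is the
first node of `W₂`). -/
def Splits {V : Type*} (W W₁ W₂ : List V) : Prop :=
  W₁ ≠ [] ∧ W₂ ≠ [] ∧ W₁.getLast? = W₂.head? ∧ W = W₁ ++ W₂.tail

/-- `W` splits at an intermediate node into `W₁ + W₂` (both parts have at least
two nodes). -/
def SplitsAt {V : Type*} (W W₁ W₂ : List V) : Prop :=
  2 ≤ W₁.length ∧ 2 ≤ W₂.length ∧ W₁.getLast? = W₂.head? ∧ W = W₁ ++ W₂.tail

/-- The no-stopover property: splitting a path at an intermediate node never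
decreases the total price. -/
def NoStopover {V : Type*} (adj : V → V → Prop) (p : List V → ℝ) : Prop :=
  ∀ W W₁ W₂ : List V, IsPath adj W → IsPath adj W₁ → IsPath adj W₂ →
    SplitsAt W W₁ W₂ → p W ≤ p W₁ + p W₂

/-- The no-elongation property: removing the last node of a path never
increases the price. -/
def NoElongation {V : Type*} (adj : V → V → Prop) (p : List V → ℝ) : Prop :=
  ∀ W : List V, IsPath adj W → 2 ≤ W.length → p W.dropLast ≤ p W

/-- Number of consecutive zone changes in a zone assignment. -/
noncomputable def assignmentBorders {Z : Type*} : List Z → ℕ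
  | x :: y :: rest => (if x = y then 0 else 1) + assignmentBorders (y :: rest)
  | _ => 0

/-- An assignment of a zone to each station occurrence of a path, choosing for
each node one of the zones it belongs to. -/
def ValidAssign {V Z : Type*} (zones : V → Set Z) (W : List V) (h : List Z) : Prop :=
  List.Forall₂ (fun v z => z ∈ zones v) W h

/-- Number of zones visited by a path in a zone tariff with overlap areas:
one plus the minimum number of zone changes over all valid assignments. -/
noncomputable def zoaCount {V Z : Type*} (zones : V → Set Z) (W : List V) : ℕ :=
  1 + sInf { b | ∃ h : List Z, ValidAssign zones W h ∧ b = assignmentBorders h }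

/-!
If `P` is subadditive, then concatenating an optimal zone assignment of `W₁` with one of `W₂`
(minus its first entry) gives an assignment of `W₁ + W₂` with at most one extra border, so
`z(W₁ + W₂) ≤ z(W₁) + z(W₂)` and monotonicity plus subadditivity of `P` give no-stopover.
Conversely, on the line `0 - 1 - 2 - ⋯` with the zones `halfZones`, splitting the path
`2, …, 2(k₁ + k₂)` at the overlap node `2k₁ + 1` gives parts visiting exactly `k₁` and `k₂`
zones, while the whole path must visit `k₁ + k₂`.
-/

section AssignmentBorders

variable {Z : Type*}

theorem assignmentBorders_cons_le (x : Z) (h : List Z) :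
    assignmentBorders (x :: h) ≤ assignmentBorders h + 1 := by
  cases h with
  | nil => simp [assignmentBorders]
  | cons y t => rw [assignmentBorders]; split <;> omega

theorem assignmentBorders_append_le (h₁ h₂ : List Z) :
    assignmentBorders (h₁ ++ h₂) ≤ assignmentBorders h₁ + assignmentBorders h₂ + 1 := by
  induction h₁ with
  | nil => simp [assignmentBorders]
  | cons x t ih =>
    cases t with
    | nil => simpa [assignmentBorders] using assignmentBorders_cons_le x h₂
    | cons y t =>
      rw [List.cons_append] at ih
      rw [List.cons_append, List.cons_append, assignmentBorders, assignmentBorders]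
      omega

theorem assignmentBorders_tail_le (h : List Z) : assignmentBorders h.tail ≤ assignmentBorders h :=
  match h with
  | [] => le_rfl
  | [_] => le_rfl
  | x :: y :: t => by rw [List.tail_cons, assignmentBorders]; omega

theorem card_toFinset_le_assignmentBorders_add_one [DecidableEq Z] (h : List Z) :
    h.toFinset.card ≤ assignmentBorders h + 1 := by
  induction h with
  | nil => simp
  | cons x t ih =>
    cases t with
    | nil => simp [assignmentBorders]
    | cons y t =>
      rw [assignmentBorders, List.toFinset_cons]
      split_ifs with hxy
      · rw [hxy, Finset.insert_eq_of_mem (List.mem_toFinset.2 List.mem_cons_self)]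
        omega
      · have := Finset.card_insert_le x (y :: t).toFinset
        omega

theorem assignmentBorders_add_one_eq_card_toFinset [LinearOrder Z] {h : List Z}
    (hs : h.Pairwise (· ≤ ·)) (hne : h ≠ []) : assignmentBorders h + 1 = h.toFinset.card := by
  induction h with
  | nil => contradiction
  | cons x t ih =>
    cases t with
    | nil => simp [assignmentBorders]
    | cons y t =>
      obtain ⟨hx, hs⟩ := List.pairwise_cons.1 hs
      have ih := ih hs (List.cons_ne_nil _ _)
      rw [assignmentBorders, List.toFinset_cons]
      split_ifs with hxy
      · rw [hxy, Finset.insert_eq_of_mem (List.mem_toFinset.2 List.mem_cons_self)]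
        omega
      · have hx_notMem : x ∉ y :: t := by
          intro hxt
          obtain ⟨hy, -⟩ := List.pairwise_cons.1 hs
          rcases List.mem_cons.1 hxt with rfl | hxt
          · exact hxy rfl
          · exact hxy (le_antisymm (hx y List.mem_cons_self) (hy x hxt))
        rw [Finset.card_insert_of_notMem (mt List.mem_toFinset.1 hx_notMem)]
        omega

end AssignmentBorders

section ZoaCount

variable {V Z : Type*} {zones : V → Set Z}

theorem ValidAssign.append_tail {W₁ W₂ : List V} {h₁ h₂ : List Z}
    (hv₁ : ValidAssign zones W₁ h₁) (hv₂ : ValidAssign zones W₂ h₂) :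
    ValidAssign zones (W₁ ++ W₂.tail) (h₁ ++ h₂.tail) := by
  refine List.rel_append hv₁ ?_
  simpa only [List.drop_one] using List.forall₂_drop 1 hv₂

theorem ValidAssign.exists_mem {W : List V} {h : List Z} (hv : ValidAssign zones W h) {v : V}
    (hvW : v ∈ W) : ∃ z ∈ h, z ∈ zones v := by
  induction hv with
  | nil => cases hvW
  | cons hz _ ih =>
    rcases List.mem_cons.1 hvW with rfl | hvW
    · exact ⟨_, List.mem_cons_self, hz⟩
    · obtain ⟨z, hzh, hz⟩ := ih hvW
      exact ⟨z, List.mem_cons_of_mem _ hzh, hz⟩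

theorem exists_validAssign (hz : ∀ v, (zones v).Nonempty) (W : List V) :
    ∃ h, ValidAssign zones W h :=
  ⟨W.map fun v => (hz v).some,
    List.forall₂_map_right_iff.2 (List.forall₂_same.2 fun v _ => (hz v).some_mem)⟩

theorem zoaCount_le {W : List V} {h : List Z} (hv : ValidAssign zones W h) :
    zoaCount zones W ≤ assignmentBorders h + 1 := by
  have : sInf { b | ∃ h, ValidAssign zones W h ∧ b = assignmentBorders h } ≤
      assignmentBorders h := Nat.sInf_le ⟨h, hv, rfl⟩
  unfold zoaCount
  omega

theorem exists_validAssign_zoaCount_eq {W : List V} (hex : ∃ h, ValidAssign zones W h) :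
    ∃ h, ValidAssign zones W h ∧ zoaCount zones W = assignmentBorders h + 1 := by
  obtain ⟨h₀, hv₀⟩ := hex
  obtain ⟨h, hv, hb⟩ := Nat.sInf_mem (⟨_, h₀, hv₀, rfl⟩ :
    { b | ∃ h, ValidAssign zones W h ∧ b = assignmentBorders h }.Nonempty)
  exact ⟨h, hv, by rw [zoaCount, hb, add_comm]⟩

theorem card_le_zoaCount [DecidableEq Z] {W : List V} {T : Finset Z}
    (hex : ∃ h, ValidAssign zones W h) (hT : ∀ h, ValidAssign zones W h → T ⊆ h.toFinset) :
    T.card ≤ zoaCount zones W := by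
  obtain ⟨h, hv, hcount⟩ := exists_validAssign_zoaCount_eq hex
  calc T.card ≤ h.toFinset.card := Finset.card_le_card (hT h hv)
    _ ≤ zoaCount zones W := hcount ▸ card_toFinset_le_assignmentBorders_add_one h

theorem one_le_zoaCount (W : List V) : 1 ≤ zoaCount zones W :=
  Nat.le_add_right 1 _

theorem zoaCount_append_tail_le (hz : ∀ v, (zones v).Nonempty) (W₁ W₂ : List V) :
    zoaCount zones (W₁ ++ W₂.tail) ≤ zoaCount zones W₁ + zoaCount zones W₂ := by
  obtain ⟨h₁, hv₁, hcount₁⟩ := exists_validAssign_zoaCount_eq (exists_validAssign hz W₁)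
  obtain ⟨h₂, hv₂, hcount₂⟩ := exists_validAssign_zoaCount_eq (exists_validAssign hz W₂)
  have := assignmentBorders_append_le h₁ h₂.tail
  have := assignmentBorders_tail_le h₂
  have := zoaCount_le (hv₁.append_tail hv₂)
  omega

theorem noStopover_zoaCount {P : ℕ → ℝ} (hmono : ∀ k l : ℕ, 1 ≤ k → k ≤ l → P k ≤ P l)
    (hsub : ∀ k₁ k₂ : ℕ, 1 ≤ k₁ → 1 ≤ k₂ → P (k₁ + k₂) ≤ P k₁ + P k₂)
    (adj : V → V → Prop) (hz : ∀ v, (zones v).Nonempty) :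
    NoStopover adj (fun W => P (zoaCount zones W)) := by
  rintro W W₁ W₂ - - - ⟨-, -, -, rfl⟩
  calc P (zoaCount zones (W₁ ++ W₂.tail))
      ≤ P (zoaCount zones W₁ + zoaCount zones W₂) :=
        hmono _ _ (one_le_zoaCount _) (zoaCount_append_tail_le hz W₁ W₂)
    _ ≤ P (zoaCount zones W₁) + P (zoaCount zones W₂) :=
        hsub _ _ (one_le_zoaCount _) (one_le_zoaCount _)

end ZoaCount

theorem isPath_range' {s n : ℕ} (hn : n ≠ 0) : IsPath (fun u v => v = u + 1) (List.range' s n) :=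
  ⟨by simpa using hn, List.isChain_range' s n 1⟩

theorem splitsAt_range' {s n₁ n₂ : ℕ} (h₁ : 2 ≤ n₁) (h₂ : 2 ≤ n₂) :
    SplitsAt (List.range' s (n₁ + n₂ - 1)) (List.range' s n₁) (List.range' (s + n₁ - 1) n₂) := by
  refine ⟨by rw [List.length_range']; omega, by rw [List.length_range']; omega, ?_, ?_⟩
  · rw [List.getLast?_range', List.head?_range', if_neg (by omega), if_neg (by omega)]
  · rw [List.tail_range', List.range'_eq_append_iff]
    exact ⟨n₁, by omega, rfl, by congr 1 <;> omega⟩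

/-- Node `2 * i` lies only in zone `i`, node `2 * i + 1` in the overlap of zones `i` and `i + 1`. -/
def halfZones (v : ℕ) : Set ℕ := {v / 2, (v + 1) / 2}

theorem halfZones_nonempty (v : ℕ) : (halfZones v).Nonempty :=
  ⟨v / 2, Or.inl rfl⟩

/-- A path starting at node `2m` or `2m - 1` and ending at `2(m + c) - 2` or `2(m + c) - 1` must
visit the zones `m, …, m + c - 1` of its even nodes, and can visit nothing else. -/
theorem zoaCount_halfZones_range' {a l m c : ℕ} (hc : 0 < c) (ha : a ≤ 2 * m)
    (ha' : 2 * m ≤ a + 1) (hb : a + l ≤ 2 * (m + c)) (hb' : 2 * (m + c) ≤ a + l + 1) :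
    zoaCount halfZones (List.range' a l) = c := by
  apply le_antisymm
  · set h := (List.range' a l).map fun v => min (m + c - 1) ((v + 1) / 2)
    have hv : ValidAssign halfZones (List.range' a l) h :=
      List.forall₂_map_right_iff.2 <| List.forall₂_same.2 fun v hv => by
        simp only [List.mem_range'_1] at hv
        simp only [halfZones, Set.mem_insert_iff, Set.mem_singleton_iff]
        omega
    have hs : h.Pairwise (· ≤ ·) :=
      List.pairwise_map.2 <| List.pairwise_le_range'.imp fun hvw => by omega
    have hne : h ≠ [] := by simp only [h, ne_eq, List.map_eq_nil_iff, List.range'_eq_nil_iff]; omega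
    calc zoaCount halfZones (List.range' a l) ≤ assignmentBorders h + 1 := zoaCount_le hv
      _ = h.toFinset.card := assignmentBorders_add_one_eq_card_toFinset hs hne
      _ ≤ (Finset.Ico m (m + c)).card := Finset.card_le_card fun z hz => by
        simp only [h, List.mem_toFinset, List.mem_map, List.mem_range'_1] at hz
        rw [Finset.mem_Ico]
        omega
      _ = c := by simp
  · calc c = (Finset.Ico m (m + c)).card := by simp
      _ ≤ _ := card_le_zoaCount (exists_validAssign halfZones_nonempty _) fun g hg i hi => by
        rw [Finset.mem_Ico] at hi
        obtain ⟨z, hzg, hz⟩ := hg.exists_mem (v := 2 * i) (List.mem_range'_1.2 (by omega))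
        simp only [halfZones, Set.mem_insert_iff, Set.mem_singleton_iff] at hz
        rw [List.mem_toFinset, show i = z by omega]
        exact hzg

/-- Fix an increasing price function `P`. All zone tariffs with overlap areas
w.r.t. `P` satisfy the no-stopover property if and only if `P` is subadditive:
`P(k₁+k₂) ≤ P(k₁) + P(k₂)` for all `k₁, k₂ ≥ 1`. -/
theorem zoa_no_stopover_iff (P : ℕ → ℝ)
    (hmono : ∀ k l : ℕ, 1 ≤ k → k ≤ l → P k ≤ P l) :
    (∀ (V Z : Type) (adj : V → V → Prop) (zones : V → Set Z),
        (∀ v, (zones v).Nonempty) →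
        NoStopover adj (fun W => P (zoaCount zones W))) ↔
      (∀ k₁ k₂ : ℕ, 1 ≤ k₁ → 1 ≤ k₂ → P (k₁ + k₂) ≤ P k₁ + P k₂) := by
  refine ⟨fun hns k₁ k₂ hk₁ hk₂ => ?_,
    fun hsub V Z adj zones hz => noStopover_zoaCount hmono hsub adj hz⟩
  have hW : zoaCount halfZones (List.range' 2 (2 * k₁ + 2 * k₂ - 1)) = k₁ + k₂ :=
    zoaCount_halfZones_range' (m := 1) (by omega) (by omega) (by omega) (by omega) (by omega)
  have hW₁ : zoaCount halfZones (List.range' 2 (2 * k₁)) = k₁ :=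
    zoaCount_halfZones_range' (m := 1) (by omega) (by omega) (by omega) (by omega) (by omega)
  have hW₂ : zoaCount halfZones (List.range' (2 + 2 * k₁ - 1) (2 * k₂)) = k₂ :=
    zoaCount_halfZones_range' (m := k₁ + 1) (by omega) (by omega) (by omega) (by omega) (by omega)
  have hsplit := splitsAt_range' (s := 2) (n₁ := 2 * k₁) (n₂ := 2 * k₂) (by omega) (by omega)
  have key := hns ℕ ℕ _ halfZones halfZones_nonempty _ _ _ (isPath_range' (by omega))
    (isPath_range' (by omega)) (isPath_range' (by omega)) hsplit
  simpa only [hW, hW₁, hW₂] using key
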